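/- arXiv:0704.2633 — 3 statements merged into one kernel-verified Lean document; each statement's English description precedes it below -/
import Mathlib

section
/- For indeterminates ξ₁,…,ξ_N and parameters p,q with p+q=1, the following identity holds: ∑_{k=1}^N ∏_{j≠k}(p+qξ_kξ_j−ξ_k) · (1−ξ_k)/ξ_k · 1/∏_{j≠k}(ξ_j−ξ_k) = p^{N−1}(1−ξ₁ξ₂⋯ξ_N)/(ξ₁ξ₂⋯ξ_N), provided the ξ_i are nonzero and pairwise distinct. -/
/-!
Put `r = p / q` and `f(x) = ∏ⱼ (p + (q ξⱼ - 1) x)`, a polynomial of degree at most `N`. Its divided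
difference over the `N + 2` nodes `0, r, ξ₁, …, ξ_N` vanishes. Since `p + q = 1`, the factor
`j = k` of `f(ξₖ)` is `(1 - ξₖ)(p - q ξₖ) = -q (1 - ξₖ)(r - ξₖ)`, so the nodes `ξₖ` contribute
`-q` times the left-hand side, while `0` and `r` contribute `q pᴺ⁻¹ / ∏ ξⱼ` and `-q pᴺ⁻¹`.
This needs `p, q ≠ 0` and `r ∉ {ξⱼ}`; both sides are polynomials in `p` (with `q = 1 - p`), so the
identity extends to all `p`.
-/

open Finset Polynomial

section DividedDifference

variable {F : Type*} [Field F] [DecidableEq F]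

/-- `(-1) ^ (#s - 1)` times the usual divided difference of `g` at the nodes `s`. -/
def dividedDifference (s : Finset F) (g : F → F) : F :=
  ∑ x ∈ s, g x / ∏ y ∈ s.erase x, (y - x)

lemma dividedDifference_insert {s : Finset F} {a : F} (ha : a ∉ s) (g : F → F) :
    dividedDifference (insert a s) g
      = g a / ∏ y ∈ s, (y - a) + dividedDifference s (fun x => g x / (a - x)) := by
  rw [dividedDifference, sum_insert ha, erase_insert ha, dividedDifference]
  congr 1
  refine sum_congr rfl fun x hx => ?_
  have hxa : x ≠ a := ne_of_mem_of_not_mem hx ha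
  rw [erase_insert_of_ne hxa.symm, prod_insert fun h => ha (mem_of_mem_erase h), div_div]

lemma dividedDifference_image {ι : Type*} [DecidableEq ι] {v : ι → F}
    (hv : Function.Injective v) (s : Finset ι) (g : F → F) :
    dividedDifference (s.image v) g = ∑ i ∈ s, g (v i) / ∏ j ∈ s.erase i, (v j - v i) := by
  rw [dividedDifference, sum_image hv.injOn]
  refine sum_congr rfl fun i _ => ?_
  rw [← image_erase hv, prod_image hv.injOn]

lemma dividedDifference_eval_eq_zero {s : Finset F} {f : F[X]} (hf : f.natDegree + 1 < #s) :
    dividedDifference s f.eval = 0 := by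
  have hdeg : (f.comp (-X)).natDegree < #s - 1 := by
    have := natDegree_comp_le (p := f) (q := -X)
    rw [natDegree_neg, natDegree_X, mul_one] at this
    omega
  -- the nodes `-x` turn the factors `-x - -y` of `Lagrange.coeff_eq_sum` into `y - x`
  have h := Lagrange.coeff_eq_sum (v := Neg.neg) (s := s) (fun _ _ _ _ => neg_inj.mp)
    (degree_le_natDegree.trans_lt (by exact_mod_cast hdeg.trans_le (Nat.sub_le _ _)))
  rw [coeff_eq_zero_of_natDegree_lt hdeg] at h
  simpa [dividedDifference, neg_add_eq_sub] using h.symm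

end DividedDifference

lemma Polynomial.eq_of_eval_eq_of_eval_ne_zero {R : Type*} [CommRing R] [IsDomain R] [Infinite R]
    {f g Q : R[X]}
    (hQ : Q ≠ 0) (h : ∀ x, Q.eval x ≠ 0 → f.eval x = g.eval x) : f = g := by
  have hprod : (f - g) * Q = 0 := Polynomial.funext fun x => by
    by_cases hx : Q.eval x = 0
    · simp [hx]
    · simp [h x hx]
  exact sub_eq_zero.mp ((mul_eq_zero.mp hprod).resolve_right hQ)

section LinearProd

variable {F : Type*} [Field F] {ι : Type*} [Fintype ι]

noncomputable def linearProd (p q : F) (ξ : ι → F) : F[X] :=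
  ∏ j, (C (q * ξ j - 1) * X + C p)

lemma natDegree_linearProd_le (p q : F) (ξ : ι → F) :
    (linearProd p q ξ).natDegree ≤ Fintype.card ι := by
  refine (natDegree_prod_le _ _).trans ?_
  simpa using sum_le_sum fun j (_ : j ∈ univ) => natDegree_linear_le (a := q * ξ j - 1) (b := p)

lemma eval_zero_linearProd (p q : F) (ξ : ι → F) :
    (linearProd p q ξ).eval 0 = p ^ Fintype.card ι := by
  simp only [linearProd, eval_prod, eval_add, eval_mul, eval_C, eval_X, mul_zero, zero_add,
    prod_const, card_univ]

lemma eval_div_linearProd {p q : F} (hpq : p + q = 1) (hq : q ≠ 0) (ξ : ι → F) :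
    (linearProd p q ξ).eval (p / q) = p ^ Fintype.card ι * ∏ j, (ξ j - p / q) := by
  have hqr : q * (p / q) = p := mul_div_cancel₀ p hq
  rw [← card_univ, ← prod_const, ← prod_mul_distrib, linearProd, eval_prod]
  refine prod_congr rfl fun j _ => ?_
  simp only [eval_add, eval_mul, eval_C, eval_X]
  linear_combination (ξ j - 1) * hqr + p / q * hpq

lemma eval_linearProd_apply [DecidableEq ι] {p q : F} (hpq : p + q = 1) (ξ : ι → F) (k : ι) :
    (linearProd p q ξ).eval (ξ k)
      = (1 - ξ k) * (p - q * ξ k) * ∏ j ∈ univ.erase k, (p + q * ξ k * ξ j - ξ k) := by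
  rw [linearProd, eval_prod, ← mul_prod_erase univ _ (mem_univ k)]
  congr 1
  · simp only [eval_add, eval_mul, eval_C, eval_X]
    linear_combination ξ k * hpq
  · exact prod_congr rfl fun j _ => by simp only [eval_add, eval_mul, eval_C, eval_X]; ring

lemma eval_linearProd_apply_div_sub [DecidableEq ι] {p q : F} (hpq : p + q = 1) (hq : q ≠ 0)
    {ξ : ι → F} {k : ι} (hξ : ξ k ≠ 0) (hpξ : p - q * ξ k ≠ 0) :
    (linearProd p q ξ).eval (ξ k) / (0 - ξ k) / (p / q - ξ k)
      = -q * ((∏ j ∈ univ.erase k, (p + q * ξ k * ξ j - ξ k)) * ((1 - ξ k) / ξ k)) := by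
  have hrξ : p / q - ξ k = (p - q * ξ k) / q := by field_simp
  rw [eval_linearProd_apply hpq, hrξ]
  generalize p - q * ξ k = a at hpξ ⊢
  field_simp
  ring

end LinearProd

variable {F : Type*} [Field F] {ι : Type*} [Fintype ι] [DecidableEq ι] [Nonempty ι]

theorem sum_prod_div_prod_sub_of_ne_zero {p q : F} (hpq : p + q = 1) (hp : p ≠ 0) (hq : q ≠ 0)
    {ξ : ι → F} (hne : ∀ i, ξ i ≠ 0) (hinj : Function.Injective ξ)
    (hpξ : ∀ i, p - q * ξ i ≠ 0) :
    ∑ k, (∏ j ∈ univ.erase k, (p + q * ξ k * ξ j - ξ k)) *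
        ((1 - ξ k) / ξ k) * (1 / ∏ j ∈ univ.erase k, (ξ j - ξ k))
      = p ^ (Fintype.card ι - 1) * (1 - ∏ j, ξ j) / ∏ j, ξ j := by
  classical
  obtain ⟨n, hn⟩ : ∃ n, Fintype.card ι = n + 1 :=
    Nat.exists_eq_add_one_of_ne_zero Fintype.card_ne_zero
  set r := p / q
  have hqr : q * r = p := mul_div_cancel₀ p hq
  have hr0 : r ≠ 0 := div_ne_zero hp hq
  have hξr : ∀ i, ξ i ≠ r := fun i h => hpξ i (by rw [h, hqr, sub_self])
  set T := univ.image ξ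
  have hrT : r ∉ T := by simpa [T] using hξr
  have h0T : (0 : F) ∉ insert r T := by simpa [T, eq_comm (a := (0 : F))] using ⟨hr0, hne⟩
  have hdeg : (linearProd p q ξ).natDegree + 1 < #(insert 0 (insert r T)) := by
    have := natDegree_linearProd_le p q ξ
    rw [card_insert_of_notMem h0T, card_insert_of_notMem hrT,
      card_image_of_injective _ hinj, card_univ]
    omega
  have hterm : ∀ k, (linearProd p q ξ).eval (ξ k) / (0 - ξ k) / (r - ξ k) =
      -q * ((∏ j ∈ univ.erase k, (p + q * ξ k * ξ j - ξ k)) * ((1 - ξ k) / ξ k)) := fun k =>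
    eval_linearProd_apply_div_sub hpq hq (hne k) (hpξ k)
  have hfr : (linearProd p q ξ).eval r = p ^ Fintype.card ι * ∏ j, (ξ j - r) :=
    eval_div_linearProd hpq hq ξ
  have h := dividedDifference_eval_eq_zero hdeg
  rw [dividedDifference_insert h0T, dividedDifference_insert hrT, dividedDifference_image hinj,
    prod_insert hrT, prod_image hinj.injOn, prod_image hinj.injOn] at h
  simp only [sub_zero, eval_zero_linearProd, hfr, hterm, hn] at h
  set S := ∑ k, (∏ j ∈ univ.erase k, (p + q * ξ k * ξ j - ξ k)) *
    ((1 - ξ k) / ξ k) * (1 / ∏ j ∈ univ.erase k, (ξ j - ξ k))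
  have hsum : ∑ k, -q * ((∏ j ∈ univ.erase k, (p + q * ξ k * ξ j - ξ k)) * ((1 - ξ k) / ξ k)) /
      ∏ j ∈ univ.erase k, (ξ j - ξ k) = -q * S := by
    rw [mul_sum]
    exact sum_congr rfl fun k _ => by ring
  have hP : ∏ j, ξ j ≠ 0 := prod_ne_zero_iff.mpr fun j _ => hne j
  have hW : ∏ j, (ξ j - r) ≠ 0 := prod_ne_zero_iff.mpr fun j _ => sub_ne_zero.mpr (hξr j)
  rw [hsum] at h
  rw [hn, Nat.add_sub_cancel, eq_div_iff hP]
  field_simp at h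
  apply mul_left_cancel₀ (mul_ne_zero hr0 hp)
  linear_combination h - r * (∏ j, ξ j) * S * hqr

theorem sum_prod_div_prod_sub [Infinite F] {p q : F} (hpq : p + q = 1) {ξ : ι → F}
    (hne : ∀ i, ξ i ≠ 0) (hinj : Function.Injective ξ) :
    ∑ k, (∏ j ∈ univ.erase k, (p + q * ξ k * ξ j - ξ k)) *
        ((1 - ξ k) / ξ k) * (1 / ∏ j ∈ univ.erase k, (ξ j - ξ k))
      = p ^ (Fintype.card ι - 1) * (1 - ∏ j, ξ j) / ∏ j, ξ j := by
  obtain rfl : q = 1 - p := by linear_combination hpq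
  set L : F[X] := ∑ k, (∏ j ∈ univ.erase k, (X + (1 - X) * C (ξ k) * C (ξ j) - C (ξ k))) *
    C ((1 - ξ k) / ξ k) * C (1 / ∏ j ∈ univ.erase k, (ξ j - ξ k))
  set R : F[X] := X ^ (Fintype.card ι - 1) * C ((1 - ∏ j, ξ j) / ∏ j, ξ j)
  have hL : ∀ x, L.eval x = ∑ k, (∏ j ∈ univ.erase k, (x + (1 - x) * ξ k * ξ j - ξ k)) *
      ((1 - ξ k) / ξ k) * (1 / ∏ j ∈ univ.erase k, (ξ j - ξ k)) := fun x => by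
    simp [L, eval_finsetSum, eval_prod]
  have hR : ∀ x, R.eval x = x ^ (Fintype.card ι - 1) * (1 - ∏ j, ξ j) / ∏ j, ξ j := fun x => by
    simp only [R, eval_mul, eval_pow, eval_X, eval_C, mul_div_assoc]
  set Q : F[X] := X * (1 - X) * ∏ j, (X - (1 - X) * C (ξ j))
  have hQ : Q ≠ 0 := by
    refine mul_ne_zero (mul_ne_zero X_ne_zero fun h => ?_)
      (prod_ne_zero_iff.mpr fun j _ h => hne j ?_)
    · simpa using congrArg (eval 0) h
    · simpa using congrArg (eval 0) h
  have hLR : L = R := eq_of_eval_eq_of_eval_ne_zero hQ fun x hx => by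
    simp only [Q, eval_mul, eval_sub, eval_one, eval_X, eval_prod, eval_C, mul_ne_zero_iff,
      prod_ne_zero_iff, mem_univ, true_implies] at hx
    obtain ⟨⟨hx0, hx1⟩, hxξ⟩ := hx
    rw [hL, hR]
    exact sum_prod_div_prod_sub_of_ne_zero (add_sub_cancel x 1) hx0 hx1 hne hinj hxξ
  rw [← hL, ← hR, hLR]

theorem stmt_0 (N : ℕ) (hN : 1 ≤ N) (p q : ℂ) (hpq : p + q = 1)
    (ξ : Fin N → ℂ) (hne : ∀ i, ξ i ≠ 0) (hinj : Function.Injective ξ) :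
    ∑ k : Fin N,
      (∏ j ∈ univ.erase k, (p + q * ξ k * ξ j - ξ k)) *
        ((1 - ξ k) / ξ k) * (1 / ∏ j ∈ univ.erase k, (ξ j - ξ k))
      = p ^ (N - 1) * (1 - ∏ j, ξ j) / ∏ j, ξ j := by
  have : Nonempty (Fin N) := ⟨⟨0, hN⟩⟩
  simpa using sum_prod_div_prod_sub hpq hne hinj
end

section
/- For indeterminates ξ₁,…,ξ_N and parameters p,q with p+q=1, ∑_{σ∈S_N} sgn(σ) · ∏_{i<j}(p+qξ_{σ(i)}ξ_{σ(j)}−ξ_{σ(i)}) · ξ_{σ(2)}ξ_{σ(3)}²⋯ξ_{σ(N)}^{N−1} / [(1−ξ_{σ(1)}ξ_{σ(2)}⋯ξ_{σ(N)})(1−ξ_{σ(2)}⋯ξ_{σ(N)})⋯(1−ξ_{σ(N)})] = p^{N(N−1)/2} · ∏_{i<j}(ξ_j−ξ_i) / ∏_j(1−ξ_j). -/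
/-!
Group the permutations by `m = σ 0`. The factors of the summand that involve `ξ m` do not depend
on how the other variables are ordered, so the inner sum is the same sum for the `N - 1` variables
`ξ ∘ m.succAbove`, and induction on `N` together with the Laplace-type splitting of the
Vandermonde product at `m` reduces the theorem to the identity
`∑ m, (1 - x m) * ∏_{j ≠ m} (p + q x_m x_j - x_m) x_j / (x_j - x_m) = p ^ n * (1 - ∏ j, x j)`
for `n + 1` distinct variables. That identity is again proved by induction:
after multiplying by `∏ j, (y j - t)` it becomes a polynomial identity of degree `n + 2` in the new
variable `t`, which is checked at `t = 0`, at `t = 1` (the induction hypothesis) and at the `n + 1`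
old variables, where the poles of two summands cancel. When `ξ` is not injective both sides
vanish, the left side being antisymmetric.
-/

open Finset Polynomial Equiv

theorem sum_sign_mul_comp_eq_zero {ι α R : Type*} [Fintype ι] [DecidableEq ι] [CommRing R]
    {ξ : ι → α} (hξ : ¬ Function.Injective ξ) (F : (ι → α) → R) :
    ∑ σ : Perm ι, ((Perm.sign σ : ℤ) : R) * F (ξ ∘ σ) = 0 := by
  obtain ⟨i, j, hij, hne⟩ := Function.not_injective_iff.mp hξ
  have hswap : ξ ∘ swap i j = ξ := by
    rw [comp_swap_eq_update, hij, Function.update_eq_self, ← hij, Function.update_eq_self]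
  refine sum_ninvolution (swap i j * ·) (fun σ => ?_) (fun σ _ => ?_) (fun _ => mem_univ _)
    (fun σ => swap_mul_self_mul i j σ)
  · rw [Perm.coe_mul, ← Function.comp_assoc, hswap, Perm.sign_mul, Perm.sign_swap hne]
    push_cast
    ring
  · simpa [mul_eq_right] using hne

section Vandermonde

variable {R : Type*} [CommRing R]

theorem prod_Ioi_sub_comp_perm {n : ℕ} (x : Fin n → R) (σ : Perm (Fin n)) :
    ∏ i, ∏ j ∈ Ioi i, (x (σ j) - x (σ i)) =
      Perm.sign σ * ∏ i, ∏ j ∈ Ioi i, (x j - x i) := by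
  rw [← Matrix.det_vandermonde, ← Matrix.det_vandermonde, ← Matrix.det_permute]
  rfl

theorem prod_Ioi_sub_cons {n : ℕ} (a : R) (y : Fin n → R) :
    ∏ i, ∏ j ∈ Ioi i, ((Fin.cons a y : Fin (n + 1) → R) j - (Fin.cons a y : Fin (n + 1) → R) i) =
      (∏ j, (y j - a)) * ∏ i, ∏ j ∈ Ioi i, (y j - y i) := by
  simp [Fin.prod_univ_succ]

theorem Fin.comp_cycleRange_symm {α : Type*} {n : ℕ} (x : Fin (n + 1) → α) (m : Fin (n + 1)) :
    x ∘ (Fin.cycleRange m).symm = Fin.cons (x m) (x ∘ m.succAbove) := by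
  ext i
  cases i using Fin.cases <;> simp [Fin.cycleRange_symm_zero, Fin.cycleRange_symm_succ]

theorem prod_Ioi_sub_succAbove {n : ℕ} (x : Fin (n + 1) → R) (m : Fin (n + 1)) :
    ∏ i, ∏ j ∈ Ioi i, (x j - x i) =
      (-1) ^ (m : ℕ) * (∏ j, (x (m.succAbove j) - x m)) *
        ∏ i, ∏ j ∈ Ioi i, (x (m.succAbove j) - x (m.succAbove i)) := by
  have h := prod_Ioi_sub_cons (x m) (x ∘ m.succAbove)
  rw [← Fin.comp_cycleRange_symm] at h
  simp only [Function.comp_apply, prod_Ioi_sub_comp_perm, Perm.sign_symm,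
    Fin.sign_cycleRange] at h
  have hsq : ((-1 : R) ^ (m : ℕ)) * (-1) ^ (m : ℕ) = 1 := by
    rw [← mul_pow, neg_one_mul, neg_neg, one_pow]
  push_cast at h
  linear_combination (-1 : R) ^ (m : ℕ) * h - (∏ i, ∏ j ∈ Ioi i, (x j - x i)) * hsq

end Vandermonde

namespace Fin

def consPerm {n : ℕ} (m : Fin (n + 1)) (τ : Perm (Fin n)) : Perm (Fin (n + 1)) :=
  (Perm.decomposeFin.symm (0, τ)).trans (cycleRange m).symm

variable {n : ℕ} (m : Fin (n + 1)) (τ : Perm (Fin n))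

@[simp]
theorem consPerm_zero : consPerm m τ 0 = m := by
  simp [consPerm, cycleRange_symm_zero]

@[simp]
theorem consPerm_succ (i : Fin n) : consPerm m τ i.succ = m.succAbove (τ i) := by
  simp [consPerm, cycleRange_symm_succ]

theorem comp_consPerm {α : Type*} (x : Fin (n + 1) → α) :
    x ∘ consPerm m τ = cons (x m) (x ∘ m.succAbove ∘ τ) := by
  ext i
  cases i using Fin.cases <;> simp

theorem sign_consPerm : Perm.sign (consPerm m τ) = (-1) ^ (m : ℕ) * Perm.sign τ := by
  rw [consPerm, Perm.sign_trans, Perm.decomposeFin.symm_sign, Perm.sign_symm, sign_cycleRange,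
    if_pos rfl, one_mul, mul_comm]

theorem consPerm_bijective :
    Function.Bijective fun mτ : Fin (n + 1) × Perm (Fin n) => consPerm mτ.1 mτ.2 := by
  refine (Fintype.bijective_iff_injective_and_card _).mpr ⟨?_, ?_⟩
  · rintro ⟨m, τ⟩ ⟨m', τ'⟩ h
    obtain rfl : m = m' := by simpa using congr($h 0)
    refine Prod.ext rfl (Equiv.ext fun i => succAbove_right_injective (p := m) ?_)
    simpa using congr($h i.succ)
  · simp [Fintype.card_perm, Nat.factorial_succ]

theorem sum_perm_eq_sum_consPerm {M : Type*} [AddCommMonoid M] (F : Perm (Fin (n + 1)) → M) :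
    ∑ σ, F σ = ∑ m, ∑ τ, F (consPerm m τ) := by
  rw [← Fintype.sum_prod_type', Fintype.sum_bijective _ consPerm_bijective _ _ fun _ => rfl]

end Fin

theorem Polynomial.natDegree_prod_le_card {R ι : Type*} [CommSemiring R] (s : Finset ι)
    (f : ι → R[X]) (hf : ∀ i ∈ s, (f i).natDegree ≤ 1) : (∏ i ∈ s, f i).natDegree ≤ #s :=
  (natDegree_prod_le s f).trans <| by simpa using sum_le_sum hf

section PairFactor

variable {K : Type*} [Field K]

def pairFactor (p q a b : K) : K := (p + q * a * b - a) * b / (b - a)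

def pairFactorTerm {n : ℕ} (p q : K) (x : Fin (n + 1) → K) (m : Fin (n + 1)) : K :=
  (1 - x m) * ∏ j, pairFactor p q (x m) (x (m.succAbove j))

def pairFactorSum {n : ℕ} (p q : K) (x : Fin (n + 1) → K) : K :=
  ∑ m, pairFactorTerm p q x m

theorem pairFactor_mul_sub (p q : K) {a b : K} (h : a ≠ b) :
    pairFactor p q a b * (b - a) = (p + q * a * b - a) * b :=
  div_mul_cancel₀ _ (sub_ne_zero.mpr h.symm)

theorem pairFactorTerm_mul_prod_sub {n : ℕ} (p q : K) {y : Fin (n + 1) → K}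
    (hy : Function.Injective y) (k : Fin (n + 1)) :
    pairFactorTerm p q y k * ∏ j, (y (k.succAbove j) - y k) =
      (1 - y k) * ∏ j, (p + q * y k * y (k.succAbove j) - y k) * y (k.succAbove j) := by
  rw [pairFactorTerm, mul_assoc, ← prod_mul_distrib]
  congr 1
  exact prod_congr rfl fun j _ => pairFactor_mul_sub p q (hy.ne (Fin.succAbove_ne k j).symm)

theorem pairFactorSum_cons {n : ℕ} (p q t : K) (y : Fin (n + 1) → K) :
    pairFactorSum p q (Fin.cons t y : Fin (n + 2) → K) =
      (1 - t) * ∏ j, pairFactor p q t (y j) +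
        ∑ m, pairFactorTerm p q y m * pairFactor p q (y m) t := by
  rw [pairFactorSum, Fin.sum_univ_succ]
  congr 1
  refine sum_congr rfl fun m _ => ?_
  simp [pairFactorTerm, Fin.prod_univ_succ]
  ring

theorem pairFactorSum_of_eq_zero {n : ℕ} (p q : K) {x : Fin (n + 1) → K}
    (hx : Function.Injective x) {k : Fin (n + 1)} (hk : x k = 0) :
    pairFactorSum p q x = p ^ n := by
  have hvanish : ∀ m ≠ k, pairFactorTerm p q x m = 0 := by
    intro m hm
    obtain ⟨j, rfl⟩ := Fin.exists_succAbove_eq (Ne.symm hm)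
    exact mul_eq_zero_of_right _ (prod_eq_zero (mem_univ j) (by simp [pairFactor, hk]))
  have hne : ∀ j, x (k.succAbove j) ≠ 0 := fun j h =>
    Fin.succAbove_ne k j (hx (h.trans hk.symm))
  rw [pairFactorSum, Fintype.sum_eq_single k hvanish, pairFactorTerm, hk]
  simp [pairFactor, hne]

/-- `pairFactorSum p q (Fin.cons t y) * ∏ j, (y j - t)`, as a polynomial in `t`. -/
noncomputable def clearedPoly {n : ℕ} (p q : K) (y : Fin (n + 1) → K) : K[X] :=
  (1 - X) * ∏ j, (C p + C q * X * C (y j) - X) * C (y j) -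
    ∑ m, C (pairFactorTerm p q y m) *
      ((C p + C q * C (y m) * X - C (y m)) * X * ∏ j, (C (y (m.succAbove j)) - X))

theorem eval_clearedPoly {n : ℕ} (p q : K) (y : Fin (n + 1) → K) (t : K) :
    (clearedPoly p q y).eval t = (1 - t) * ∏ j, (p + q * t * y j - t) * y j -
      ∑ m, pairFactorTerm p q y m * ((p + q * y m * t - y m) * t * ∏ j, (y (m.succAbove j) - t)) := by
  simp [clearedPoly, eval_prod, eval_finsetSum]

theorem natDegree_clearedPoly_le {n : ℕ} (p q : K) (y : Fin (n + 1) → K) :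
    (clearedPoly p q y).natDegree ≤ n + 2 := by
  refine (natDegree_sub_le _ _).trans (max_le ?_ ?_)
  · have h1 : ((1 : K[X]) - X).natDegree ≤ 1 := by compute_degree
    have h2 : (∏ j, (C p + C q * X * C (y j) - X) * C (y j)).natDegree ≤ n + 1 := by
      refine (natDegree_prod_le_card univ _ fun j _ => ?_).trans_eq (by simp)
      compute_degree
    exact (natDegree_mul_le_of_le h1 h2).trans (by omega)
  · refine natDegree_sum_le_of_forall_le _ _ fun m _ => ?_
    have h1 : ((C p + C q * C (y m) * X - C (y m)) * X).natDegree ≤ 2 := by compute_degree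
    have h2 : (∏ j, (C (y (m.succAbove j)) - X)).natDegree ≤ n := by
      refine (natDegree_prod_le_card univ _ fun j _ => ?_).trans_eq (by simp)
      compute_degree
    exact (natDegree_C_mul_le _ _).trans ((natDegree_mul_le_of_le h1 h2).trans (by omega))

theorem eval_clearedPoly_zero {n : ℕ} (p q : K) (y : Fin (n + 1) → K) :
    (clearedPoly p q y).eval 0 = p ^ (n + 1) * ∏ j, y j := by
  simp [eval_clearedPoly, prod_mul_distrib]

theorem eval_clearedPoly_one {n : ℕ} {p q : K} (hpq : p + q = 1) {y : Fin (n + 1) → K}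
    (hsum : pairFactorSum p q y = p ^ n * (1 - ∏ j, y j)) :
    (clearedPoly p q y).eval 1 = p ^ (n + 1) * (1 - ∏ j, y j) * ∏ j, (y j - 1) := by
  have hfactor : ∀ m, (p + q * y m * 1 - y m) * 1 * ∏ j, (y (m.succAbove j) - 1) =
      -p * ∏ j, (y j - 1) := fun m => by
    rw [Fin.prod_univ_succAbove _ m]
    linear_combination (y m * ∏ j, (y (m.succAbove j) - 1)) * hpq
  simp only [eval_clearedPoly, hfactor]
  rw [← sum_mul, show ∑ m, pairFactorTerm p q y m = _ from hsum]
  ring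

theorem eval_clearedPoly_self {n : ℕ} (p q : K) {y : Fin (n + 1) → K}
    (hy : Function.Injective y) (k : Fin (n + 1)) :
    (clearedPoly p q y).eval (y k) = 0 := by
  have hvanish : ∀ m ≠ k, pairFactorTerm p q y m *
      ((p + q * y m * y k - y m) * y k * ∏ j, (y (m.succAbove j) - y k)) = 0 := by
    intro m hm
    obtain ⟨j, rfl⟩ := Fin.exists_succAbove_eq (Ne.symm hm)
    simp [prod_eq_zero (mem_univ j)]
  rw [eval_clearedPoly, Fintype.sum_eq_single k hvanish, Fin.prod_univ_succAbove _ k]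
  linear_combination (-(p + q * y k * y k - y k) * y k) * pairFactorTerm_mul_prod_sub p q hy k

theorem eval_clearedPoly_eq {n : ℕ} {p q : K} (hpq : p + q = 1) {y : Fin (n + 1) → K}
    (hy : Function.Injective y) (hy0 : ∀ j, y j ≠ 0) (hy1 : ∀ j, y j ≠ 1)
    (hsum : pairFactorSum p q y = p ^ n * (1 - ∏ j, y j)) (t : K) :
    (clearedPoly p q y).eval t = p ^ (n + 1) * (1 - (∏ j, y j) * t) * ∏ j, (y j - t) := by
  set B : K[X] := C (p ^ (n + 1)) * (1 - C (∏ j, y j) * X) * ∏ j, (C (y j) - X)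
  have hB : ∀ t, B.eval t = p ^ (n + 1) * (1 - (∏ j, y j) * t) * ∏ j, (y j - t) := by
    simp [B, eval_prod]
  have hBdeg : B.natDegree ≤ n + 2 := by
    have h1 : (C (p ^ (n + 1)) * (1 - C (∏ j, y j) * X)).natDegree ≤ 1 := by compute_degree
    have h2 : (∏ j, (C (y j) - X)).natDegree ≤ n + 1 := by
      refine (natDegree_prod_le_card univ _ fun j _ => ?_).trans_eq (by simp)
      compute_degree
    exact (natDegree_mul_le_of_le h1 h2).trans (by omega)
  have hnodes : Function.Injective (Fin.cons 0 (Fin.cons 1 y) : Fin (n + 3) → K) := by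
    simp only [Fin.cons_injective_iff, Set.mem_range, not_exists]
    exact ⟨fun i => Fin.cases (by simp) (fun k => by simpa using hy0 k) i, hy1, hy⟩
  rw [← hB]
  congr 1
  refine eq_of_natDegree_lt_card_of_eval_eq _ _ hnodes (fun i => ?_)
    (by simpa using max_le (natDegree_clearedPoly_le p q y) hBdeg)
  refine Fin.cases ?_ (Fin.cases ?_ fun k => ?_) i <;> simp only [Fin.cons_zero, Fin.cons_succ, hB]
  · simp [eval_clearedPoly_zero]
  · rw [eval_clearedPoly_one hpq hsum, mul_one]
  · rw [eval_clearedPoly_self p q hy, prod_eq_zero (f := fun j => y j - y k) (mem_univ k)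
      (sub_self _), mul_zero]

theorem pairFactorSum_cons_eq {n : ℕ} {p q : K} (hpq : p + q = 1) {t : K}
    {y : Fin (n + 1) → K} (hy : Function.Injective y) (hy0 : ∀ j, y j ≠ 0)
    (hy1 : ∀ j, y j ≠ 1) (hty : ∀ j, y j ≠ t)
    (hsum : pairFactorSum p q y = p ^ n * (1 - ∏ j, y j)) :
    pairFactorSum p q (Fin.cons t y : Fin (n + 2) → K) =
      p ^ (n + 1) * (1 - ∏ j, (Fin.cons t y : Fin (n + 2) → K) j) := by
  have hcleared := (eval_clearedPoly p q y t).symm.trans (eval_clearedPoly_eq hpq hy hy0 hy1 hsum t)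
  have hfirst : (∏ j, pairFactor p q t (y j)) * ∏ j, (y j - t) =
      ∏ j, (p + q * t * y j - t) * y j := by
    rw [← prod_mul_distrib]
    exact prod_congr rfl fun j _ => pairFactor_mul_sub p q (hty j).symm
  have hterm : ∀ m, pairFactor p q (y m) t * ∏ j, (y j - t) =
      -((p + q * y m * t - y m) * t * ∏ j, (y (m.succAbove j) - t)) := fun m => by
    rw [Fin.prod_univ_succAbove _ m]
    linear_combination (-∏ j, (y (m.succAbove j) - t)) * pairFactor_mul_sub p q (hty m)
  have hD : ∏ j, (y j - t) ≠ 0 := prod_ne_zero_iff.mpr fun j _ => sub_ne_zero.mpr (hty j)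
  apply mul_right_cancel₀ hD
  rw [pairFactorSum_cons, Fin.prod_cons, add_mul, mul_assoc, hfirst, sum_mul]
  simp only [mul_assoc (pairFactorTerm p q y _), hterm, mul_neg, sum_neg_distrib]
  linear_combination hcleared

theorem pairFactorSum_eq {p q : K} (hpq : p + q = 1) :
    ∀ {n : ℕ} {x : Fin (n + 1) → K}, Function.Injective x → (∀ j, x j ≠ 1) →
      pairFactorSum p q x = p ^ n * (1 - ∏ j, x j)
  | 0, x, _, _ => by simp [pairFactorSum, pairFactorTerm]
  | n + 1, x, hx, hx1 => by
    by_cases hz : ∃ k, x k = 0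
    · obtain ⟨k, hk⟩ := hz
      rw [pairFactorSum_of_eq_zero p q hx hk, prod_eq_zero (mem_univ k) hk, sub_zero, mul_one]
    push Not at hz
    rw [← Fin.cons_self_tail x]
    have htail : Function.Injective (Fin.tail x) := hx.comp (Fin.succ_injective _)
    exact pairFactorSum_cons_eq hpq htail (fun j => hz _) (fun j => hx1 _)
      (fun j => hx.ne (Fin.succ_ne_zero j)) (pairFactorSum_eq hpq htail fun j => hx1 _)

end PairFactor

section TracyWidom

variable {K : Type*} [Field K]

def tracyWidomTerm {N : ℕ} (p q : K) (x : Fin N → K) : K :=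
  (∏ i, ∏ j ∈ Ioi i, (p + q * x i * x j - x i)) * (∏ k, x k ^ (k : ℕ)) /
    ∏ k, (1 - ∏ l ∈ Ici k, x l)

def tracyWidomSum {N : ℕ} (p q : K) (ξ : Fin N → K) : K :=
  ∑ σ : Perm (Fin N), ((Perm.sign σ : ℤ) : K) * tracyWidomTerm p q (ξ ∘ σ)

theorem tracyWidomTerm_cons {n : ℕ} (p q a : K) (y : Fin n → K) :
    tracyWidomTerm p q (Fin.cons a y : Fin (n + 1) → K) =
      (∏ j, (p + q * a * y j - a) * y j) / (1 - a * ∏ j, y j) * tracyWidomTerm p q y := by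
  simp only [tracyWidomTerm, Fin.prod_univ_succ, Fin.prod_Ioi_zero, Fin.prod_Ioi_succ,
    Fin.prod_Ici_succ, Fin.cons_zero, Fin.cons_succ, Fin.val_zero, Fin.val_succ, pow_zero, pow_succ,
    prod_mul_distrib]
  rw [← bot_eq_zero, Ici_bot, Fin.prod_univ_succ]
  simp only [Fin.cons_zero, Fin.cons_succ, div_eq_mul_inv, mul_inv]
  ring

theorem tracyWidomSum_succ {n : ℕ} (p q : K) (ξ : Fin (n + 1) → K) :
    tracyWidomSum p q ξ = (∑ m : Fin (n + 1), (-1) ^ (m : ℕ) *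
      (∏ j, (p + q * ξ m * ξ (m.succAbove j) - ξ m) * ξ (m.succAbove j)) *
        tracyWidomSum p q (ξ ∘ m.succAbove)) / (1 - ∏ j, ξ j) := by
  rw [tracyWidomSum, Fin.sum_perm_eq_sum_consPerm, sum_div]
  refine sum_congr rfl fun m _ => ?_
  rw [tracyWidomSum, mul_sum, sum_div]
  refine sum_congr rfl fun τ _ => ?_
  rw [Fin.comp_consPerm, tracyWidomTerm_cons, Fin.sign_consPerm]
  simp only [Function.comp_apply, Function.comp_assoc]
  rw [Equiv.prod_comp τ (fun j => (p + q * ξ m * ξ (m.succAbove j) - ξ m) * ξ (m.succAbove j)),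
    Equiv.prod_comp τ (fun j => ξ (m.succAbove j)), ← Fin.prod_univ_succAbove ξ m]
  push_cast
  ring

theorem pairFactorTerm_mul_prod_Ioi_sub_div {n : ℕ} (p q : K) {ξ : Fin (n + 1) → K}
    (hξ : Function.Injective ξ) (h1 : ∀ j, ξ j ≠ 1) (m : Fin (n + 1)) :
    pairFactorTerm p q ξ m * ((∏ i, ∏ j ∈ Ioi i, (ξ j - ξ i)) / ∏ j, (1 - ξ j)) =
      (-1) ^ (m : ℕ) * (∏ j, (p + q * ξ m * ξ (m.succAbove j) - ξ m) * ξ (m.succAbove j)) *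
        ((∏ i, ∏ j ∈ Ioi i, (ξ (m.succAbove j) - ξ (m.succAbove i))) /
          ∏ j, (1 - ξ (m.succAbove j))) := by
  have hsub : ∏ j, (ξ (m.succAbove j) - ξ m) ≠ 0 :=
    prod_ne_zero_iff.mpr fun j _ => sub_ne_zero.mpr (hξ.ne (Fin.succAbove_ne m j))
  have hone : ∀ j, 1 - ξ j ≠ 0 := fun j => sub_ne_zero.mpr (h1 j).symm
  have hprod : ∏ j, (1 - ξ (m.succAbove j)) ≠ 0 := prod_ne_zero_iff.mpr fun j _ => hone _
  rw [prod_Ioi_sub_succAbove ξ m, Fin.prod_univ_succAbove (fun j => 1 - ξ j) m, pairFactorTerm]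
  simp only [pairFactor, prod_div_distrib]
  field_simp [hone m]

theorem tracyWidomSum_eq {N : ℕ} {p q : K} (hpq : p + q = 1) (ξ : Fin N → K)
    (h1 : ∀ j, ξ j ≠ 1) (hd : ∀ σ : Perm (Fin N), ∀ k, ∏ l ∈ Ici k, ξ (σ l) ≠ 1) :
    tracyWidomSum p q ξ =
      p ^ (N * (N - 1) / 2) * (∏ i, ∏ j ∈ Ioi i, (ξ j - ξ i)) / ∏ j, (1 - ξ j) := by
  induction N with
  | zero => simp [tracyWidomSum, tracyWidomTerm]
  | succ n ih =>
    by_cases hξ : Function.Injective ξ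
    swap
    · rw [tracyWidomSum, sum_sign_mul_comp_eq_zero hξ, ← Matrix.det_vandermonde,
        Matrix.det_vandermonde_eq_zero_iff.mpr (Function.not_injective_iff.mp hξ)]
      simp
    have hall : 1 - ∏ j, ξ j ≠ 0 := by
      refine sub_ne_zero.mpr (Ne.symm ?_)
      simpa [← bot_eq_zero, Ici_bot] using hd 1 0
    have htail : ∀ m : Fin (n + 1), tracyWidomSum p q (ξ ∘ m.succAbove) =
        p ^ (n * (n - 1) / 2) * ((∏ i, ∏ j ∈ Ioi i, (ξ (m.succAbove j) - ξ (m.succAbove i))) /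
          ∏ j, (1 - ξ (m.succAbove j))) := fun m => by
      rw [ih (ξ ∘ m.succAbove) (fun j => h1 _) fun τ k => by
        simpa [Fin.prod_Ici_succ] using hd (Fin.consPerm m τ) k.succ, mul_div_assoc]
      rfl
    simp only [tracyWidomSum_succ, htail, mul_left_comm _ (p ^ _),
      ← pairFactorTerm_mul_prod_Ioi_sub_div p q hξ h1]
    rw [← mul_sum, ← sum_mul, show ∑ m, pairFactorTerm p q ξ m = _ from pairFactorSum_eq hpq hξ h1,
      Nat.triangle_succ, pow_add]
    field_simp

end TracyWidom

theorem stmt_1_general (N : ℕ) (p q : ℂ) (hpq : p + q = 1)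
    (ξ : Fin N → ℂ) (h1 : ∀ j, ξ j ≠ 1)
    (hd : ∀ σ : Equiv.Perm (Fin N), ∀ k : Fin N, (∏ l ∈ Ici k, ξ (σ l)) ≠ 1) :
    ∑ σ : Equiv.Perm (Fin N),
      ((Equiv.Perm.sign σ : ℤ) : ℂ) *
        ((∏ i : Fin N, ∏ j ∈ Ioi i, (p + q * ξ (σ i) * ξ (σ j) - ξ (σ i))) *
          (∏ k : Fin N, ξ (σ k) ^ (k : ℕ)) /
            ∏ k : Fin N, (1 - ∏ l ∈ Ici k, ξ (σ l)))
      = p ^ (N * (N - 1) / 2) *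
          (∏ i : Fin N, ∏ j ∈ Ioi i, (ξ j - ξ i)) / ∏ j, (1 - ξ j) :=
  tracyWidomSum_eq hpq ξ h1 hd

theorem stmt_1 (N : ℕ) (hN : 1 ≤ N) (p q : ℂ) (hpq : p + q = 1)
    (ξ : Fin N → ℂ) (h1 : ∀ j, ξ j ≠ 1)
    (hd : ∀ σ : Equiv.Perm (Fin N), ∀ k : Fin N, (∏ l ∈ Ici k, ξ (σ l)) ≠ 1) :
    ∑ σ : Equiv.Perm (Fin N),
      ((Equiv.Perm.sign σ : ℤ) : ℂ) *
        ((∏ i : Fin N, ∏ j ∈ Ioi i, (p + q * ξ (σ i) * ξ (σ j) - ξ (σ i))) *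
          (∏ k : Fin N, ξ (σ k) ^ (k : ℕ)) /
            ∏ k : Fin N, (1 - ∏ l ∈ Ici k, ξ (σ l)))
      = p ^ (N * (N - 1) / 2) *
          (∏ i : Fin N, ∏ j ∈ Ioi i, (ξ j - ξ i)) / ∏ j, (1 - ξ j) :=
  stmt_1_general N p q hpq ξ h1 hd
end

section
/- For the totally asymmetric case p=1, q=0, define S(α,β) = −(1−α)/(1−β). For a permutation σ∈S_N, let A_σ = ∏{S(ξ_{σ(i)},ξ_{σ(j)}) : i<j, σ(i)>σ(j)} (product over inversions of σ). Then A_σ = sgn(σ)·∏_{i=1}^N (1−ξ_{σ(i)})^{σ(i)−i}. -/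
/-!
Write `u = 1 - ξ`. The factor of an inversion `(i, j)` of `σ` is `-1` times `u (σ i) / u (σ j)`,
and the signs multiply to `sign σ`. Collecting powers, `u (σ i)` occurs with exponent
`#{j > i | σ j < σ i} - #{j < i | σ j > σ i}`, which is `σ i - i`: the `σ i` indices `j` with
`σ j < σ i` split into those below and above `i`, while the `i` indices below `i` split according
to whether `σ j` is below or above `σ i`.
-/

open Finset

namespace Equiv.Perm

variable {n : ℕ} (σ : Perm (Fin n))

theorem cast_sign_eq_prod_prod_Ioi {R : Type*} [CommRing R] :
    ((sign σ : ℤ) : R) = ∏ i, ∏ j ∈ Ioi i, (if σ j < σ i then -1 else 1) := by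
  simp only [sign_eq_prod_prod_Ioi, Units.coe_prod, Int.cast_prod]
  refine prod_congr rfl fun i _ ↦ prod_congr rfl fun j hj ↦ ?_
  rcases lt_or_gt_of_ne (σ.injective.ne (mem_Ioi.1 hj).ne) with h | h <;>
    simp [h, h.not_gt]

theorem card_filter_apply_lt (i : Fin n) : #{j | σ j < σ i} = σ i := by
  rw [← Fin.card_Iio (σ i), ← card_map σ.toEmbedding]
  congr 1
  ext k
  simp

theorem card_filter_Ioi_apply_lt_add (i : Fin n) :
    #{j ∈ Ioi i | σ j < σ i} + i = #{j ∈ Iio i | σ i < σ j} + σ i := by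
  have hlt : #{j ∈ Iio i | σ j < σ i} + #{j ∈ Ioi i | σ j < σ i} = σ i := by
    rw [← card_filter_apply_lt σ i, ← card_union_of_disjoint]
    · congr 1
      ext j
      simp only [mem_union, mem_filter, mem_Iio, mem_Ioi, mem_univ, true_and]
      rcases lt_trichotomy j i with h | rfl | h <;> simp [*, lt_asymm]
    · refine disjoint_filter_filter (disjoint_left.2 fun j hi hj ↦ ?_)
      exact lt_asymm (mem_Iio.1 hi) (mem_Ioi.1 hj)
  have hIio : #{j ∈ Iio i | σ j < σ i} + #{j ∈ Iio i | σ i < σ j} = i := by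
    rw [← Fin.card_Iio i, ← card_filter_add_card_filter_not (s := Iio i) (fun j ↦ σ j < σ i)]
    congr 2
    refine filter_congr fun j hj ↦ ?_
    have := σ.injective.ne (mem_Iio.1 hj).ne
    exact ⟨fun h ↦ h.not_gt, fun h ↦ (not_lt.1 h).lt_of_ne' this⟩
  omega

theorem prod_prod_Ioi_ite_div {G₀ : Type*} [CommGroupWithZero G₀] {v : Fin n → G₀}
    (hv : ∀ i, v i ≠ 0) :
    ∏ i, ∏ j ∈ Ioi i, (if σ j < σ i then v i / v j else 1) = ∏ i, v i ^ ((σ i : ℤ) - i) := by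
  have hsplit : ∀ i j, (if σ j < σ i then v i / v j else 1)
      = (if σ j < σ i then v i else 1) / (if σ j < σ i then v j else 1) := by
    intro i j
    split_ifs <;> simp
  have hnum : ∏ i, ∏ j ∈ Ioi i, (if σ j < σ i then v i else 1)
      = ∏ i, v i ^ #{j ∈ Ioi i | σ j < σ i} := by
    simp_rw [← prod_filter, prod_const]
  have hden : ∏ i, ∏ j ∈ Ioi i, (if σ j < σ i then v j else 1)
      = ∏ j, v j ^ #{i ∈ Iio j | σ j < σ i} := by
    rw [prod_comm' (t' := univ) (s' := Iio) (by simp)]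
    simp_rw [← prod_filter, prod_const]
  simp_rw [hsplit, prod_div_distrib]
  rw [hnum, hden, ← prod_div_distrib]
  refine prod_congr rfl fun i _ ↦ ?_
  have := card_filter_Ioi_apply_lt_add σ i
  rw [← zpow_natCast_sub_natCast₀ (hv i)]
  congr 1
  omega

theorem prod_prod_Ioi_ite_neg_div {K : Type*} [Field K] {v : Fin n → K} (hv : ∀ i, v i ≠ 0) :
    ∏ i, ∏ j ∈ Ioi i, (if σ j < σ i then -(v i / v j) else 1)
      = ((sign σ : ℤ) : K) * ∏ i, v i ^ ((σ i : ℤ) - i) := by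
  have hfactor : ∀ i j, (if σ j < σ i then -(v i / v j) else 1)
      = (if σ j < σ i then -1 else 1) * (if σ j < σ i then v i / v j else 1) := by
    intro i j
    split_ifs <;> simp
  simp_rw [hfactor, prod_mul_distrib]
  rw [cast_sign_eq_prod_prod_Ioi, prod_prod_Ioi_ite_div σ hv]

end Equiv.Perm

theorem stmt_10 (N : ℕ) (ξ : Fin N → ℂ) (h1 : ∀ i, ξ i ≠ 1)
    (σ : Equiv.Perm (Fin N)) :
    (∏ i : Fin N, ∏ j ∈ Ioi i,
        if σ j < σ i then -((1 - ξ (σ i)) / (1 - ξ (σ j))) else 1)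
      = ((Equiv.Perm.sign σ : ℤ) : ℂ) *
          ∏ i : Fin N, (1 - ξ (σ i)) ^ (((σ i : ℕ) : ℤ) - ((i : ℕ) : ℤ)) :=
  σ.prod_prod_Ioi_ite_neg_div (v := fun i ↦ 1 - ξ (σ i)) fun i ↦ sub_ne_zero.2 (h1 (σ i)).symm
end
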